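/- arXiv:1201.3495 — 2 statements merged into one kernel-verified Lean document; each statement's English description precedes it below -/
import Mathlib

section
/- If (w_i) is a positive sequence such that there exists ε>0 and k₀ with 1/w_k² ≥ ε·∑_{i=k}^∞ 1/w_i² for all k ≥ k₀ (in particular ∑ 1/w_i² < ∞), then for all k ≥ k₀ one has ∑_{j=k}^∞ (j-k+1)²/w_j² ≤ (2/ε³)·(1/w_k²). -/
/-!
Write `T f k = ∑_{i ≥ 0} f (k + i)` for tail sums. Summing the hypothesis `ε · T f ≤ f` (on
`[k₀, ∞)`) over a tail shows that `T f` satisfies it too, hence `ε³ · T³ f k ≤ f k`. Exchanging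
the order of summation gives `T^[n+1] f k = ∑_j C(j + n, n) f (k + j)` (hockey stick), and
`(j + 1)² ≤ 2 · C(j + 2, 2)`. In `ℝ≥0∞` all these tail sums and exchanges are unconditional.
-/

open scoped ENNReal
open Finset

noncomputable def tailSum (f : ℕ → ℝ≥0∞) (k : ℕ) : ℝ≥0∞ := ∑' i, f (k + i)

lemma ENNReal.tsum_tsum_eq_tsum_sum_antidiagonal (F : ℕ → ℕ → ℝ≥0∞) :
    ∑' i, ∑' j, F i j = ∑' n, ∑ p ∈ antidiagonal n, F p.1 p.2 := by
  rw [← ENNReal.tsum_prod, ← HasAntidiagonal.sigmaAntidiagonalEquivProd.tsum_eq,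
    ENNReal.tsum_sigma']
  exact tsum_congr fun n => Finset.tsum_subtype (antidiagonal n) fun p => F p.1 p.2

lemma tailSum_tsum_mul (c f : ℕ → ℝ≥0∞) (k : ℕ) :
    tailSum (fun m => ∑' j, c j * f (m + j)) k =
      ∑' n, (∑ j ∈ range (n + 1), c j) * f (k + n) := by
  rw [tailSum, ENNReal.tsum_comm, ENNReal.tsum_tsum_eq_tsum_sum_antidiagonal]
  refine tsum_congr fun n => ?_
  calc ∑ p ∈ antidiagonal n, c p.1 * f (k + p.2 + p.1)
      = ∑ p ∈ antidiagonal n, c p.1 * f (k + n) := sum_congr rfl fun p hp => by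
        rw [← mem_antidiagonal.1 hp, add_assoc, add_comm p.2]
    _ = (∑ j ∈ range (n + 1), c j) * f (k + n) := by
        rw [← sum_mul, Nat.sum_antidiagonal_eq_sum_range_succ fun i _ => c i]

lemma tailSum_iterate_succ (f : ℕ → ℝ≥0∞) (n k : ℕ) :
    tailSum^[n + 1] f k = ∑' j, ((j + n).choose n : ℝ≥0∞) * f (k + j) := by
  induction n generalizing k with
  | zero => simp [tailSum]
  | succ n ih =>
    rw [Function.iterate_succ_apply', funext ih, tailSum_tsum_mul]
    simp_rw [← Nat.cast_sum, Nat.sum_range_add_choose, add_assoc]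

section

variable {f : ℕ → ℝ≥0∞} {ε : ℝ≥0∞} {k₀ : ℕ}

lemma mul_tailSum_tailSum_le (h : ∀ m, k₀ ≤ m → ε * tailSum f m ≤ f m) :
    ∀ m, k₀ ≤ m → ε * tailSum (tailSum f) m ≤ tailSum f m := by
  intro m hm
  rw [tailSum, ← ENNReal.tsum_mul_left]
  exact ENNReal.tsum_le_tsum fun i => h (m + i) (hm.trans (Nat.le_add_right m i))

lemma pow_mul_tailSum_iterate_le (h : ∀ m, k₀ ≤ m → ε * tailSum f m ≤ f m) (n : ℕ) :
    ∀ m, k₀ ≤ m → ε ^ n * tailSum^[n] f m ≤ f m := by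
  induction n generalizing f with
  | zero => simp
  | succ n ih =>
    intro m hm
    calc ε ^ (n + 1) * tailSum^[n + 1] f m
        = ε * (ε ^ n * tailSum^[n] (tailSum f) m) := by
          rw [Function.iterate_succ_apply, pow_succ', mul_assoc]
      _ ≤ ε * tailSum f m := by gcongr; exact ih (mul_tailSum_tailSum_le h) m hm
      _ ≤ f m := h m hm

lemma add_one_sq_le_two_mul_choose_two (j : ℕ) : (j + 1) ^ 2 ≤ 2 * (j + 2).choose 2 := by
  have := Nat.add_one_mul_choose_eq (j + 1) 1
  rw [Nat.choose_one_right] at this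
  nlinarith

lemma pow_three_mul_tsum_add_one_sq_le (h : ∀ m, k₀ ≤ m → ε * tailSum f m ≤ f m)
    {k : ℕ} (hk : k₀ ≤ k) :
    ε ^ 3 * ∑' j : ℕ, ((j : ℝ≥0∞) + 1) ^ 2 * f (k + j) ≤ 2 * f k := by
  have hweights : ∑' j : ℕ, ((j : ℝ≥0∞) + 1) ^ 2 * f (k + j) ≤ 2 * tailSum^[3] f k := by
    rw [tailSum_iterate_succ, ← ENNReal.tsum_mul_left]
    refine ENNReal.tsum_le_tsum fun j => ?_
    rw [← mul_assoc]
    gcongr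
    exact_mod_cast add_one_sq_le_two_mul_choose_two j
  calc ε ^ 3 * ∑' j : ℕ, ((j : ℝ≥0∞) + 1) ^ 2 * f (k + j)
      ≤ 2 * (ε ^ 3 * tailSum^[3] f k) := by
        rw [mul_left_comm]; gcongr
    _ ≤ 2 * f k := by gcongr; exact pow_mul_tailSum_iterate_le h 3 k hk

end

lemma tsum_add_one_sq_mul_le_of_tail_le {a : ℕ → ℝ} (ha : ∀ i, 0 ≤ a i) (hsum : Summable a)
    {ε : ℝ} (hε : 0 < ε) {k₀ : ℕ} (h : ∀ k, k₀ ≤ k → ε * ∑' i, a (k + i) ≤ a k)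
    {k : ℕ} (hk : k₀ ≤ k) :
    ∑' j : ℕ, ((j : ℝ) + 1) ^ 2 * a (k + j) ≤ 2 / ε ^ 3 * a k := by
  set f : ℕ → ℝ≥0∞ := fun n => ENNReal.ofReal (a n)
  have hf : ∀ m, k₀ ≤ m → ENNReal.ofReal ε * tailSum f m ≤ f m := fun m hm => by
    have hsum_m : Summable fun i => a (m + i) := hsum.comp_injective (add_right_injective m)
    rw [tailSum, ← ENNReal.ofReal_tsum_of_nonneg (fun i => ha _) hsum_m,
      ← ENNReal.ofReal_mul hε.le]
    exact ENNReal.ofReal_le_ofReal (h m hm)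
  have hlhs : ∑' j : ℕ, ((j : ℝ) + 1) ^ 2 * a (k + j) =
      (∑' j : ℕ, ((j : ℝ≥0∞) + 1) ^ 2 * f (k + j)).toReal := by
    rw [ENNReal.tsum_toReal_eq fun j => by finiteness]
    congr 1 with j
    simp [f, ENNReal.toReal_ofReal (ha _), ENNReal.toReal_add]
  have hrhs : ENNReal.ofReal (2 / ε ^ 3 * a k) = 2 * f k / ENNReal.ofReal ε ^ 3 := by
    rw [mul_comm, ENNReal.ofReal_mul (ha k), ENNReal.ofReal_div_of_pos (by positivity),
      ENNReal.ofReal_pow hε.le, ENNReal.ofReal_ofNat, ← mul_div_assoc, mul_comm]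
  rw [hlhs]
  refine ENNReal.toReal_le_of_le_ofReal (mul_nonneg (by positivity) (ha k)) ?_
  rw [hrhs, ENNReal.le_div_iff_mul_le (by simp [hε]) (by simp), mul_comm]
  exact pow_three_mul_tsum_add_one_sq_le hf hk

theorem stmt_0_general (w : ℕ → ℝ)
    (hsum : Summable (fun i => 1 / (w i) ^ 2))
    (ε : ℝ) (hε : 0 < ε) (k₀ : ℕ)
    (hyp : ∀ k, k₀ ≤ k → ε * ∑' i : ℕ, 1 / (w (k + i)) ^ 2 ≤ 1 / (w k) ^ 2) :
    ∀ k, k₀ ≤ k →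
      ∑' j : ℕ, ((j : ℝ) + 1) ^ 2 / (w (k + j)) ^ 2 ≤ (2 / ε ^ 3) * (1 / (w k) ^ 2) := by
  intro k hk
  simpa only [mul_one_div] using
    tsum_add_one_sq_mul_le_of_tail_le (fun i => by positivity) hsum hε hyp hk

theorem stmt_0 (w : ℕ → ℝ) (hw : ∀ i, 0 < w i)
    (hsum : Summable (fun i => 1 / (w i) ^ 2))
    (ε : ℝ) (hε : 0 < ε) (k₀ : ℕ)
    (hyp : ∀ k, k₀ ≤ k → ε * ∑' i : ℕ, 1 / (w (k + i)) ^ 2 ≤ 1 / (w k) ^ 2) :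
    ∀ k, k₀ ≤ k →
      ∑' j : ℕ, ((j : ℝ) + 1) ^ 2 / (w (k + j)) ^ 2 ≤ (2 / ε ^ 3) * (1 / (w k) ^ 2) :=
  stmt_0_general w hsum ε hε k₀ hyp
end

section
/- Let (w_i) be a non-decreasing positive sequence, and consider the fine-time urn process with parameter d. For all k₀ and k ≥ 0, |M_{k₀+k} − M_{k₀} − (N_{k₀+k} − N_{k₀})| ≤ 2d / w_{X_{k₀}}, where X_k = min(R̃_{⌊k⌋_d}, G̃_{⌊k⌋_d}). -/
/-!
Write `f = 1 / w`, which is antitone. On red steps `M - N` gains `f (R̃ ⌊ℓ⌋_d) - f (R̃ ℓ) ≥ 0`, on green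
steps it loses `f (G̃ ⌊ℓ⌋_d) - f (G̃ ℓ) ≥ 0`. For `A = R̃, G̃` and the antitone `g ℓ = f (A ⌊ℓ⌋_d)`,
each such term is at most `g ℓ - g (ℓ + d)`, since `ℓ` lies below the next block start. Sums of
these `d`-step differences telescope to `d` values of `g` minus `d` nonnegative ones, so each of the
red and green parts lies in `[0, d · f (X_{k₀})]`.
-/

open Finset

theorem Finset.sum_range_sub_shift {M : Type*} [AddCommGroup M] (f : ℕ → M) (n d : ℕ) :
    ∑ i ∈ range n, (f i - f (i + d)) = ∑ j ∈ range d, (f j - f (n + j)) := by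
  have hsplit : ∀ i, f i - f (i + d) = ∑ j ∈ range d, (f (i + j) - f (i + j + 1)) := fun i => by
    simpa only [add_zero, add_assoc] using (sum_range_sub' (fun j => f (i + j)) d).symm
  simp only [hsplit]
  rw [sum_comm]
  refine sum_congr rfl fun j _ => ?_
  simpa only [zero_add, add_right_comm _ 1 j] using sum_range_sub' (fun i => f (i + j)) n

theorem sum_range_le_mul_of_le_sub_shift {G t : ℕ → ℝ} (hG : Antitone G) (hG0 : ∀ i, 0 ≤ G i)
    {d : ℕ} (ht : ∀ ℓ, t ℓ ≤ G ℓ - G (ℓ + d)) (a n : ℕ) :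
    ∑ i ∈ range n, t (a + i) ≤ d * G a :=
  calc ∑ i ∈ range n, t (a + i) ≤ ∑ i ∈ range n, (G (a + i) - G (a + i + d)) :=
        sum_le_sum fun i _ => ht (a + i)
    _ = ∑ j ∈ range d, (G (a + j) - G (a + (n + j))) := by
        simpa only [add_assoc] using Finset.sum_range_sub_shift (fun i => G (a + i)) n d
    _ ≤ ∑ _j ∈ range d, G a :=
        sum_le_sum fun j _ => by linarith [hG0 (a + (n + j)), hG (Nat.le_add_right a j)]
    _ = d * G a := by simp

section BlockFrozen

variable {φ : ℕ → ℝ} (hφ : Antitone φ) {d : ℕ} (p : ℕ → Prop) [DecidablePred p]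
include hφ

theorem sub_blockStart_nonneg (ℓ : ℕ) : 0 ≤ φ (d * (ℓ / d)) - φ ℓ :=
  sub_nonneg.2 (hφ (Nat.mul_div_le ℓ d))

theorem sub_blockStart_le (hd : 0 < d) (ℓ : ℕ) :
    φ (d * (ℓ / d)) - φ ℓ ≤ φ (d * (ℓ / d)) - φ (d * ((ℓ + d) / d)) := by
  have : ℓ ≤ d * ((ℓ + d) / d) := by
    rw [Nat.add_div_right ℓ hd]; exact (Nat.lt_mul_div_succ ℓ hd).le
  linarith [hφ this]

theorem sum_ite_sub_blockStart_nonneg (a n : ℕ) :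
    0 ≤ ∑ i ∈ range n, (if p (a + i) then φ (d * ((a + i) / d)) - φ (a + i) else 0) :=
  sum_nonneg fun i _ => by split_ifs <;> simp [sub_blockStart_nonneg hφ]

theorem sum_ite_sub_blockStart_le (hφ0 : ∀ i, 0 ≤ φ i) (hd : 0 < d) (a n : ℕ) :
    ∑ i ∈ range n, (if p (a + i) then φ (d * ((a + i) / d)) - φ (a + i) else 0)
      ≤ d * φ (d * (a / d)) := by
  have hG : Antitone fun ℓ => φ (d * (ℓ / d)) := fun i j hij =>
    hφ (Nat.mul_le_mul_left d (Nat.div_le_div_right hij))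
  refine sum_range_le_mul_of_le_sub_shift hG (fun _ => hφ0 _) (d := d)
    (t := fun ℓ => if p ℓ then φ (d * (ℓ / d)) - φ ℓ else 0) (fun ℓ => ?_) a n
  split_ifs
  · exact sub_blockStart_le hφ hd ℓ
  · exact sub_nonneg.2 (hG (Nat.le_add_right ℓ d))

end BlockFrozen

theorem sum_ite_one_div_blockStart_sub_mem_Icc {d : ℕ} (hd : 0 < d) {w : ℕ → ℝ}
    (hw : ∀ i, 0 < w i) (hmono : Monotone w) {A : ℕ → ℕ} (hA : Monotone A) (p : ℕ → Prop)
    [DecidablePred p] {a b : ℕ} (hb : b ≤ d * (a / d)) (n : ℕ) :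
    ∑ i ∈ range n, (if p (a + i) then 1 / w (A (d * ((a + i) / d))) - 1 / w (A (a + i)) else 0)
      ∈ Set.Icc 0 (d * (1 / w (A b))) := by
  have hφ : Antitone fun i => 1 / w (A i) := fun _ _ hij =>
    one_div_le_one_div_of_le (hw _) (hmono (hA hij))
  refine ⟨sum_ite_sub_blockStart_nonneg hφ p a n, ?_⟩
  calc _ ≤ d * (1 / w (A (d * (a / d)))) :=
        sum_ite_sub_blockStart_le hφ p (fun _ => (one_div_pos.2 (hw _)).le) hd a n
    _ ≤ d * (1 / w (A b)) := mul_le_mul_of_nonneg_left (hφ hb) d.cast_nonneg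

theorem stmt_17_general (d : ℕ) (hd : 1 ≤ d)
    (w : ℕ → ℝ) (hw : ∀ i, 0 < w i) (hmono : Monotone w)
    (R G : ℕ → ℕ)
    (hstep : ∀ ℓ, (R (ℓ + 1) = R ℓ + 1 ∧ G (ℓ + 1) = G ℓ) ∨
      (R (ℓ + 1) = R ℓ ∧ G (ℓ + 1) = G ℓ + 1))
    (N M : ℕ → ℝ)
    (hN : ∀ k, N k = ∑ ℓ ∈ Finset.range k,
      (if R (ℓ + 1) = R ℓ + 1 then 1 / w (R ℓ) else - (1 / w (G ℓ))))
    (hM : ∀ k, M k = ∑ ℓ ∈ Finset.range k,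
      (if R (ℓ + 1) = R ℓ + 1 then 1 / w (R (d * (ℓ / d))) else - (1 / w (G (d * (ℓ / d)))))) :
    ∀ k₀ k : ℕ,
      |(M (k₀ + k) - M k₀) - (N (k₀ + k) - N k₀)| ≤
        2 * d / w (min (R (d * ((k₀ - 1) / d))) (G (d * ((k₀ - 1) / d)))) := by
  intro k₀ k
  have hRmono : Monotone R := monotone_nat_of_le_succ fun ℓ => by rcases hstep ℓ with h | h <;> omega
  have hGmono : Monotone G := monotone_nat_of_le_succ fun ℓ => by rcases hstep ℓ with h | h <;> omega
  set p : ℕ → Prop := fun ℓ => R (ℓ + 1) = R ℓ + 1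
  have hdiff : (M (k₀ + k) - M k₀) - (N (k₀ + k) - N k₀) =
      ∑ i ∈ range k, (if p (k₀ + i) then
        1 / w (R (d * ((k₀ + i) / d))) - 1 / w (R (k₀ + i)) else 0) -
      ∑ i ∈ range k, (if ¬ p (k₀ + i) then
        1 / w (G (d * ((k₀ + i) / d))) - 1 / w (G (k₀ + i)) else 0) := by
    simp only [hM, hN, sum_range_add, add_sub_cancel_left, ← sum_sub_distrib]
    exact sum_congr rfl fun i _ => by split_ifs <;> ring
  set b := d * ((k₀ - 1) / d)
  have hb : b ≤ d * (k₀ / d) := Nat.mul_le_mul_left d (Nat.div_le_div_right (Nat.sub_le k₀ 1))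
  obtain ⟨hSR0, hSR⟩ := sum_ite_one_div_blockStart_sub_mem_Icc hd hw hmono hRmono p hb k
  obtain ⟨hSG0, hSG⟩ := sum_ite_one_div_blockStart_sub_mem_Icc hd hw hmono hGmono (¬ p ·) hb k
  have hRm : 1 / w (R b) ≤ 1 / w (min (R b) (G b)) :=
    one_div_le_one_div_of_le (hw _) (hmono (min_le_left _ _))
  have hGm : 1 / w (G b) ≤ 1 / w (min (R b) (G b)) :=
    one_div_le_one_div_of_le (hw _) (hmono (min_le_right _ _))
  have hm0 : 0 ≤ 1 / w (min (R b) (G b)) := (one_div_pos.2 (hw _)).le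
  rw [hdiff, ← mul_one_div, abs_sub_le_iff]
  constructor <;> nlinarith

/-- Comparison of `M` and `N`: for non-decreasing weights, pathwise along the
fine-time urn process, `|（M_{k₀+k} − M_{k₀}) − (N_{k₀+k} − N_{k₀})| ≤ 2d/w_{X_{k₀}}`
where `X_k = min(R̃_{⌊k⌋_d}, G̃_{⌊k⌋_d})` and `⌊k⌋_d = d⌊(k−1)/d⌋`. -/
theorem stmt_17 (d : ℕ) (hd : 1 ≤ d)
    (w : ℕ → ℝ) (hw : ∀ i, 0 < w i) (hmono : Monotone w)
    (R G : ℕ → ℕ) (hR0 : R 0 = 0) (hG0 : G 0 = 0)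
    (hstep : ∀ ℓ, (R (ℓ + 1) = R ℓ + 1 ∧ G (ℓ + 1) = G ℓ) ∨
      (R (ℓ + 1) = R ℓ ∧ G (ℓ + 1) = G ℓ + 1))
    (N M : ℕ → ℝ)
    (hN : ∀ k, N k = ∑ ℓ ∈ Finset.range k,
      (if R (ℓ + 1) = R ℓ + 1 then 1 / w (R ℓ) else - (1 / w (G ℓ))))
    (hM : ∀ k, M k = ∑ ℓ ∈ Finset.range k,
      (if R (ℓ + 1) = R ℓ + 1 then 1 / w (R (d * (ℓ / d))) else - (1 / w (G (d * (ℓ / d)))))) :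
    ∀ k₀ k : ℕ,
      |(M (k₀ + k) - M k₀) - (N (k₀ + k) - N k₀)| ≤
        2 * d / w (min (R (d * ((k₀ - 1) / d))) (G (d * ((k₀ - 1) / d)))) :=
  stmt_17_general d hd w hw hmono R G hstep N M hN hM
end
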